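/- In the nonstandard list model whose universe consists of finite integer sequences together with pairs (s, i) of an infinite integer sequence and an integer index, with Cons prepending on finite sequences and Cons(j, (s,i)) = (j::s, i+1) on nonstandard elements, the tail of any nonstandard element is again a nonstandard element; consequently, the interpretation elems that assigns to every finite sequence its set of entries and to every nonstandard element the set of entries of its sequence together with {-1} satisfies the recurrence elems(x) = if isNil x then ∅ else {head x} ∪ elems(tail x) for all elements of the universe. -/
import Mathlib


abbrev U := List ℤ ⊕ ((ℕ → ℤ) × ℤ)

def NilU : U := Sum.inl []

def ConsU (j : ℤ) : U → U
  | Sum.inl l => Sum.inl (j :: l)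
  | Sum.inr (s, i) => Sum.inr (fun n => if n = 0 then j else s (n - 1), i + 1)

def headU : U → ℤ
  | Sum.inl [] => 0
  | Sum.inl (h :: _) => h
  | Sum.inr (s, _) => s 0

def tailU : U → U
  | Sum.inl [] => Sum.inl []
  | Sum.inl (_ :: t) => Sum.inl t
  | Sum.inr (s, i) => Sum.inr (fun n => s (n + 1), i - 1)

def isNil : U → Bool
  | Sum.inl [] => true
  | _ => false

def elems : U → Set ℤ
  | Sum.inl l => {v | v ∈ l}
  | Sum.inr (s, _) => {v | ∃ n, s n = v} ∪ {-1}

theorem nonstandard_elems_model :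
    (∀ (s : ℕ → ℤ) (i : ℤ), ∃ (s' : ℕ → ℤ) (i' : ℤ),
        tailU (Sum.inr (s, i)) = Sum.inr (s', i')) ∧
    (∀ x : U, elems x = if isNil x = true then ∅ else {headU x} ∪ elems (tailU x)) := by
  constructor
  · intro s i
    exact ⟨fun n => s (n + 1), i - 1, rfl⟩
  · intro x
    match x with
    | Sum.inl [] => simp [elems, isNil]
    | Sum.inl (h :: t) =>
      rw [if_neg (by simp [isNil])]
      simp only [elems, tailU, headU]
      ext v; simp [List.mem_cons]
    | Sum.inr (s, i) =>
      rw [if_neg (by simp [isNil])]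
      simp only [elems, tailU, headU]
      ext v
      simp only [Set.mem_union, Set.mem_setOf_eq, Set.mem_singleton_iff]
      constructor
      · rintro (⟨n, rfl⟩ | rfl)
        · cases n with
          | zero => exact Or.inl rfl
          | succ k => exact Or.inr (Or.inl ⟨k, rfl⟩)
        · exact Or.inr (Or.inr rfl)
      · rintro (rfl | ⟨k, rfl⟩ | rfl)
        · exact Or.inl ⟨0, rfl⟩
        · exact Or.inl ⟨k + 1, rfl⟩
        · exact Or.inr rfl
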